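/- For every φ ∈ X and every measurable set B ⊂ ℝ³, ∫_B |∂₁φ∧∂₂φ∧∂₃φ| dx ≤ |B|^{1/4} (∫_B |A(φ)|² dx)^{3/4}, where |B| denotes the Lebesgue measure of B. -/

import Mathlib

/- Common setting: Skyrme maps φ : ℝ³ → S³ ⊂ ℝ⁴ with weak partial derivatives. -/

open MeasureTheory Real Filter
open scoped Topology ENNReal BigOperators

noncomputable section

abbrev R3 : Type := Fin 3 → ℝ
abbrev R4 : Type := Fin 4 → ℝ

/-- Euclidean dot product on ℝ⁴. -/
def dot (u v : R4) : ℝ := ∑ a, u a * v a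

/-- Squared Euclidean norm on ℝ⁴. -/
def nsq (u : R4) : ℝ := dot u u

/-- |u∧v|² = |u|²|v|² − ⟨u,v⟩². -/
def wedgeSq (u v : R4) : ℝ := nsq u * nsq v - (dot u v) ^ 2

/-- Gram determinant of three vectors of ℝ⁴. -/
def gram (u v w : R4) : ℝ :=
  Matrix.det !![dot u u, dot u v, dot u w; dot v u, dot v v, dot v w; dot w u, dot w v, dot w w]

/-- Determinant of the 4×4 matrix with columns a, b, c, d. -/
def det4 (a b c d : R4) : ℝ := Matrix.det (Matrix.of fun i j => ![a, b, c, d] j i)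

/-- Smooth compactly supported test functions on ℝ³. -/
def IsTestFun {E : Type*} [NormedAddCommGroup E] [NormedSpace ℝ E] (ψ : R3 → E) : Prop :=
  ContDiff ℝ (⊤ : ℕ∞) ψ ∧ HasCompactSupport ψ

/-- A weakly differentiable map φ : ℝ³ → S³ ⊂ ℝ⁴ together with its weak
partial derivatives `pderiv i = ∂ᵢφ`. -/
structure SkyrmeMap where
  toFun : R3 → R4
  pderiv : Fin 3 → R3 → R4
  meas : Measurable toFun
  pderiv_locInt : ∀ i, LocallyIntegrable (pderiv i) volume
  sphere : ∀ᵐ x : R3, nsq (toFun x) = 1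
  weak : ∀ (i : Fin 3) (a : Fin 4) (ψ : R3 → ℝ), IsTestFun ψ →
    ∫ x : R3, fderiv ℝ ψ x (Pi.single i 1) * toFun x a
      = - ∫ x : R3, ψ x * pderiv i x a

/-- |∇φ|² = Σᵢ |∂ᵢφ|². -/
def gradSq (φ : SkyrmeMap) (x : R3) : ℝ := ∑ i, nsq (φ.pderiv i x)

/-- |A(φ)|² = Σᵢⱼ |∂ᵢφ∧∂ⱼφ|². -/
def ASq (φ : SkyrmeMap) (x : R3) : ℝ := ∑ i, ∑ j, wedgeSq (φ.pderiv i x) (φ.pderiv j x)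

/-- The Skyrme energy density |∇φ|² + |A(φ)|². -/
def energyDensity (φ : SkyrmeMap) (x : R3) : ℝ := gradSq φ x + ASq φ x

/-- φ ∈ X : finite Skyrme energy. -/
def memX (φ : SkyrmeMap) : Prop := Integrable (energyDensity φ) volume

/-- The Skyrme energy ℰ(φ). -/
def energy (φ : SkyrmeMap) : ℝ := ∫ x, energyDensity φ x

/-- det(φ, ∇φ)(x). -/
def detDen (φ : SkyrmeMap) (x : R3) : ℝ :=
  det4 (φ.toFun x) (φ.pderiv 0 x) (φ.pderiv 1 x) (φ.pderiv 2 x)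

/-- The topological degree d(φ) = (1/(2π²)) ∫ det(φ,∇φ). -/
def degree (φ : SkyrmeMap) : ℝ := (1 / (2 * π ^ 2)) * ∫ x, detDen φ x

/-- I_k = inf of the energy over maps of degree k. -/
def Skyrme.I (k : ℤ) : ℝ :=
  sInf {E : ℝ | ∃ φ : SkyrmeMap, memX φ ∧ degree φ = (k : ℝ) ∧ energy φ = E}

/-- The north pole P = (0,0,0,1) of S³. -/
def northPole : R4 := ![0, 0, 0, 1]

/-- The Euclidean ball B(y,r) in ℝ³. -/
def eball (y : R3) (r : ℝ) : Set R3 := {x | ∑ i, (x i - y i) ^ 2 < r ^ 2}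


/-! ### Auxiliary algebraic lemmas -/

private lemma skl_fischer (a b c x y z : ℝ) (hb : 0 ≤ b) (hc : 0 ≤ c)
    (h23 : 0 ≤ b*c - z^2) :
    a*b*c + 2*x*y*z - a*z^2 - b*y^2 - c*x^2 ≤ a * (b*c - z^2) := by
  have key : 0 ≤ b*y^2 + c*x^2 - 2*x*y*z := by
    obtain h | h := hb.eq_or_lt
    · have hb0 : b = 0 := h.symm
      subst hb0
      have hz2 : z ^ 2 = 0 := le_antisymm (by linarith) (sq_nonneg z)
      have hz : z = 0 := pow_eq_zero_iff (two_ne_zero) |>.mp hz2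
      subst hz
      nlinarith [mul_nonneg hc (sq_nonneg x)]
    · nlinarith [sq_nonneg (b*y - x*z), mul_nonneg (sq_nonneg x) h23]
  linarith

private lemma skl_scalar_key (a b c x y z : ℝ) (hb : 0 ≤ b) (hc : 0 ≤ c)
    (h23 : 0 ≤ b*c - z^2)
    (hd : 0 ≤ a*b*c + 2*x*y*z - a*z^2 - b*y^2 - c*x^2) :
    (a*b*c + 2*x*y*z - a*z^2 - b*y^2 - c*x^2)^2
      ≤ (a*b - x^2) * ((a*c - y^2) * (b*c - z^2)) := by
  set D := a*b*c + 2*x*y*z - a*z^2 - b*y^2 - c*x^2 with hD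
  have hf : D ≤ a * (b*c - z^2) := skl_fischer a b c x y z hb hc h23
  have hadj : (a*b - x^2) * (a*c - y^2) = a * D + (x*y - a*z)^2 := by rw [hD]; ring
  calc D^2 = D * D := sq D
    _ ≤ (a * (b*c - z^2)) * D := mul_le_mul_of_nonneg_right hf hd
    _ ≤ (a * D + (x*y - a*z)^2) * (b*c - z^2) := by
        nlinarith [sq_nonneg (x*y - a*z), mul_nonneg h23 (sq_nonneg (x*y - a*z))]
    _ = (a*b - x^2) * ((a*c - y^2) * (b*c - z^2)) := by
        linear_combination (b*c - z^2) * hadj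

private lemma skl_dot_self_nonneg (u : R4) : 0 ≤ dot u u :=
  Finset.sum_nonneg fun a _ => mul_self_nonneg (u a)

private lemma skl_wedgeSq_nonneg (u v : R4) : 0 ≤ wedgeSq u v := by
  simp only [wedgeSq, nsq, dot, Fin.sum_univ_four]
  nlinarith [sq_nonneg (u 0 * v 1 - u 1 * v 0), sq_nonneg (u 0 * v 2 - u 2 * v 0),
    sq_nonneg (u 0 * v 3 - u 3 * v 0), sq_nonneg (u 1 * v 2 - u 2 * v 1),
    sq_nonneg (u 1 * v 3 - u 3 * v 1), sq_nonneg (u 2 * v 3 - u 3 * v 2)]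

private lemma skl_gram_eq (u v w : R4) :
    gram u v w = dot u u * dot v v * dot w w + 2 * dot u v * dot u w * dot v w
      - dot u u * dot v w ^ 2 - dot v v * dot u w ^ 2 - dot w w * dot u v ^ 2 := by
  simp [gram, Matrix.det_fin_three]
  have h1 : dot v u = dot u v := by
    simp only [dot]; exact Finset.sum_congr rfl fun a _ => mul_comm _ _
  have h2 : dot w u = dot u w := by
    simp only [dot]; exact Finset.sum_congr rfl fun a _ => mul_comm _ _
  have h3 : dot w v = dot v w := by
    simp only [dot]; exact Finset.sum_congr rfl fun a _ => mul_comm _ _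
  rw [h1, h2, h3]; ring

private lemma skl_gram_nonneg (u v w : R4) : 0 ≤ gram u v w := by
  have key : gram u v w =
      (u 0 * (v 1 * w 2 - v 2 * w 1) - v 0 * (u 1 * w 2 - u 2 * w 1)
        + w 0 * (u 1 * v 2 - u 2 * v 1))^2
    + (u 0 * (v 1 * w 3 - v 3 * w 1) - v 0 * (u 1 * w 3 - u 3 * w 1)
        + w 0 * (u 1 * v 3 - u 3 * v 1))^2
    + (u 0 * (v 2 * w 3 - v 3 * w 2) - v 0 * (u 2 * w 3 - u 3 * w 2)
        + w 0 * (u 2 * v 3 - u 3 * v 2))^2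
    + (u 1 * (v 2 * w 3 - v 3 * w 2) - v 1 * (u 2 * w 3 - u 3 * w 2)
        + w 1 * (u 2 * v 3 - u 3 * v 2))^2 := by
    rw [skl_gram_eq]
    simp only [dot, Fin.sum_univ_four]
    ring
  rw [key]; positivity

private lemma skl_gram_sq_le (u v w : R4) :
    gram u v w ^ 2 ≤ wedgeSq u v * (wedgeSq u w * wedgeSq v w) := by
  have h := skl_scalar_key (dot u u) (dot v v) (dot w w) (dot u v) (dot u w) (dot v w)
    (skl_dot_self_nonneg v) (skl_dot_self_nonneg w)
    (skl_wedgeSq_nonneg v w)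
    (by rw [← skl_gram_eq]; exact skl_gram_nonneg u v w)
  rw [skl_gram_eq]
  exact h

private lemma skl_wedgeSq_comm (u v : R4) : wedgeSq u v = wedgeSq v u := by
  have h : dot u v = dot v u := by
    simp only [dot]; exact Finset.sum_congr rfl fun a _ => mul_comm _ _
  simp only [wedgeSq, nsq, h]; ring

private lemma skl_wedgeSq_self (u : R4) : wedgeSq u u = 0 := by
  simp [wedgeSq, nsq]; ring

private lemma skl_gram_sq_le_ASq (φ : SkyrmeMap) (x : R3) :
    gram (φ.pderiv 0 x) (φ.pderiv 1 x) (φ.pderiv 2 x) ^ 2 ≤ ASq φ x ^ 3 := by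
  set u := φ.pderiv 0 x
  set v := φ.pderiv 1 x
  set w := φ.pderiv 2 x
  have hA : ASq φ x = 2 * (wedgeSq u v + wedgeSq u w + wedgeSq v w) := by
    simp only [ASq, Fin.sum_univ_three]
    rw [skl_wedgeSq_self u, skl_wedgeSq_self v, skl_wedgeSq_self w,
      skl_wedgeSq_comm v u, skl_wedgeSq_comm w u, skl_wedgeSq_comm w v]
    ring
  have h1 := skl_wedgeSq_nonneg u v
  have h2 := skl_wedgeSq_nonneg u w
  have h3 := skl_wedgeSq_nonneg v w
  have key := skl_gram_sq_le u v w
  rw [hA]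
  nlinarith [mul_nonneg h1 h2, mul_nonneg h1 h3, mul_nonneg h2 h3,
    mul_nonneg (mul_nonneg h1 h2) h3, mul_nonneg (mul_nonneg h1 h1) h1,
    mul_nonneg (mul_nonneg h2 h2) h2, mul_nonneg (mul_nonneg h3 h3) h3,
    mul_nonneg (mul_nonneg h1 h1) h2, mul_nonneg (mul_nonneg h1 h1) h3,
    mul_nonneg (mul_nonneg h2 h2) h1, mul_nonneg (mul_nonneg h2 h2) h3,
    mul_nonneg (mul_nonneg h3 h3) h1, mul_nonneg (mul_nonneg h3 h3) h2]

private lemma skl_ASq_nonneg (φ : SkyrmeMap) (x : R3) : 0 ≤ ASq φ x :=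
  Finset.sum_nonneg fun i _ => Finset.sum_nonneg fun j _ => skl_wedgeSq_nonneg _ _

private lemma skl_pointwise (φ : SkyrmeMap) (x : R3) :
    ENNReal.ofReal
        (Real.sqrt (gram (φ.pderiv 0 x) (φ.pderiv 1 x) (φ.pderiv 2 x)))
          ^ ((4:ℝ)/3)
      ≤ ENNReal.ofReal (ASq φ x) := by
  set g := gram (φ.pderiv 0 x) (φ.pderiv 1 x) (φ.pderiv 2 x) with hgdef
  have hg : 0 ≤ g := skl_gram_nonneg _ _ _
  have hS : 0 ≤ ASq φ x := skl_ASq_nonneg φ x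
  have h2 : g ^ 2 ≤ ASq φ x ^ 3 := skl_gram_sq_le_ASq φ x
  rw [ENNReal.ofReal_rpow_of_nonneg (Real.sqrt_nonneg g) (by norm_num : (0:ℝ) ≤ 4/3)]
  apply ENNReal.ofReal_le_ofReal
  have e1 : Real.sqrt g ^ ((4:ℝ)/3) = g ^ ((2:ℝ)/3) := by
    rw [Real.sqrt_eq_rpow, ← Real.rpow_mul hg]
    norm_num
  have e2 : g ^ ((2:ℝ)/3) = (g ^ (2:ℕ)) ^ ((1:ℝ)/3) := by
    rw [← Real.rpow_natCast g 2, ← Real.rpow_mul hg]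
    norm_num
  have e3 : (ASq φ x ^ (3:ℕ)) ^ ((1:ℝ)/3) = ASq φ x := by
    rw [← Real.rpow_natCast (ASq φ x) 3, ← Real.rpow_mul hS]
    norm_num
  rw [e1, e2, ← e3]
  exact Real.rpow_le_rpow (by positivity) h2 (by norm_num)

/-! ### Measurability -/

private lemma skl_ASq_eq (φ : SkyrmeMap) (x : R3) :
    ASq φ x = 2 * (wedgeSq (φ.pderiv 0 x) (φ.pderiv 1 x)
      + wedgeSq (φ.pderiv 0 x) (φ.pderiv 2 x)
      + wedgeSq (φ.pderiv 1 x) (φ.pderiv 2 x)) := by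
  simp only [ASq, Fin.sum_univ_three]
  rw [skl_wedgeSq_self, skl_wedgeSq_self, skl_wedgeSq_self,
    skl_wedgeSq_comm (φ.pderiv 1 x) (φ.pderiv 0 x),
    skl_wedgeSq_comm (φ.pderiv 2 x) (φ.pderiv 0 x),
    skl_wedgeSq_comm (φ.pderiv 2 x) (φ.pderiv 1 x)]
  ring

private lemma skl_hcomp (φ : SkyrmeMap) (i : Fin 3) (a : Fin 4) :
    AEMeasurable (fun x => φ.pderiv i x a) (volume : Measure R3) :=
  (measurable_pi_apply a).comp_aemeasurable
    (φ.pderiv_locInt i).aestronglyMeasurable.aemeasurable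

private lemma skl_hdot (φ : SkyrmeMap) (i j : Fin 3) :
    AEMeasurable (fun x => dot (φ.pderiv i x) (φ.pderiv j x))
      (volume : Measure R3) := by
  simp only [dot, Fin.sum_univ_four]
  exact ((((skl_hcomp φ i 0).mul (skl_hcomp φ j 0)).add
      ((skl_hcomp φ i 1).mul (skl_hcomp φ j 1))).add
    (((skl_hcomp φ i 2).mul (skl_hcomp φ j 2)).add
      ((skl_hcomp φ i 3).mul (skl_hcomp φ j 3)))).congr
    (Filter.Eventually.of_forall fun x => by simp only [Pi.add_apply, Pi.mul_apply]; ring)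

private lemma skl_aemeas_gram (φ : SkyrmeMap) :
    AEMeasurable
      (fun x => ENNReal.ofReal
        (Real.sqrt (gram (φ.pderiv 0 x) (φ.pderiv 1 x) (φ.pderiv 2 x))))
      (volume : Measure R3) := by
  have e : (fun x => gram (φ.pderiv 0 x) (φ.pderiv 1 x) (φ.pderiv 2 x))
      = fun x => dot (φ.pderiv 0 x) (φ.pderiv 0 x) * dot (φ.pderiv 1 x) (φ.pderiv 1 x)
          * dot (φ.pderiv 2 x) (φ.pderiv 2 x)
        + 2 * dot (φ.pderiv 0 x) (φ.pderiv 1 x) * dot (φ.pderiv 0 x) (φ.pderiv 2 x)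
          * dot (φ.pderiv 1 x) (φ.pderiv 2 x)
        - dot (φ.pderiv 0 x) (φ.pderiv 0 x)
          * (dot (φ.pderiv 1 x) (φ.pderiv 2 x) * dot (φ.pderiv 1 x) (φ.pderiv 2 x))
        - dot (φ.pderiv 1 x) (φ.pderiv 1 x)
          * (dot (φ.pderiv 0 x) (φ.pderiv 2 x) * dot (φ.pderiv 0 x) (φ.pderiv 2 x))
        - dot (φ.pderiv 2 x) (φ.pderiv 2 x)
          * (dot (φ.pderiv 0 x) (φ.pderiv 1 x) * dot (φ.pderiv 0 x) (φ.pderiv 1 x)) :=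
    funext fun x => by rw [skl_gram_eq]; ring
  have hg : AEMeasurable
      (fun x => gram (φ.pderiv 0 x) (φ.pderiv 1 x) (φ.pderiv 2 x))
      (volume : Measure R3) := by
    rw [e]
    exact (((((((skl_hdot φ 0 0).mul (skl_hdot φ 1 1)).mul (skl_hdot φ 2 2)).add
      (((aemeasurable_const.mul (skl_hdot φ 0 1)).mul (skl_hdot φ 0 2)).mul
        (skl_hdot φ 1 2))).sub
      ((skl_hdot φ 0 0).mul ((skl_hdot φ 1 2).mul (skl_hdot φ 1 2)))).sub
      ((skl_hdot φ 1 1).mul ((skl_hdot φ 0 2).mul (skl_hdot φ 0 2)))).sub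
      ((skl_hdot φ 2 2).mul ((skl_hdot φ 0 1).mul (skl_hdot φ 0 1))))
  exact ENNReal.measurable_ofReal.comp_aemeasurable
    (Real.continuous_sqrt.measurable.comp_aemeasurable hg)

private lemma skl_aemeas_ASq (φ : SkyrmeMap) :
    AEMeasurable (fun x => ENNReal.ofReal (ASq φ x)) (volume : Measure R3) := by
  have e : (fun x => ASq φ x)
      = fun x => 2 * ((dot (φ.pderiv 0 x) (φ.pderiv 0 x) * dot (φ.pderiv 1 x) (φ.pderiv 1 x)
            - dot (φ.pderiv 0 x) (φ.pderiv 1 x) * dot (φ.pderiv 0 x) (φ.pderiv 1 x))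
          + (dot (φ.pderiv 0 x) (φ.pderiv 0 x) * dot (φ.pderiv 2 x) (φ.pderiv 2 x)
            - dot (φ.pderiv 0 x) (φ.pderiv 2 x) * dot (φ.pderiv 0 x) (φ.pderiv 2 x))
          + (dot (φ.pderiv 1 x) (φ.pderiv 1 x) * dot (φ.pderiv 2 x) (φ.pderiv 2 x)
            - dot (φ.pderiv 1 x) (φ.pderiv 2 x) * dot (φ.pderiv 1 x) (φ.pderiv 2 x))) :=
    funext fun x => by rw [skl_ASq_eq]; simp only [wedgeSq, nsq]; ring
  have hA : AEMeasurable (fun x => ASq φ x) (volume : Measure R3) := by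
    rw [e]
    exact aemeasurable_const.mul
      (((((skl_hdot φ 0 0).mul (skl_hdot φ 1 1)).sub
          ((skl_hdot φ 0 1).mul (skl_hdot φ 0 1))).add
        (((skl_hdot φ 0 0).mul (skl_hdot φ 2 2)).sub
          ((skl_hdot φ 0 2).mul (skl_hdot φ 0 2)))).add
        (((skl_hdot φ 1 1).mul (skl_hdot φ 2 2)).sub
          ((skl_hdot φ 1 2).mul (skl_hdot φ 1 2))))
  exact ENNReal.measurable_ofReal.comp_aemeasurable hA

/-- ∫_B |∂₁φ∧∂₂φ∧∂₃φ| ≤ |B|^{1/4} (∫_B |A(φ)|²)^{3/4}. -/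
theorem skyrme_local_jacobian_bound (φ : SkyrmeMap) (hφ : memX φ)
    (B : Set R3) (hB : MeasurableSet B) :
    ∫⁻ x in B, ENNReal.ofReal
        (Real.sqrt (gram (φ.pderiv 0 x) (φ.pderiv 1 x) (φ.pderiv 2 x)))
      ≤ (volume B) ^ ((1 : ℝ) / 4)
          * (∫⁻ x in B, ENNReal.ofReal (ASq φ x)) ^ ((3 : ℝ) / 4) := by
  set F : R3 → ℝ≥0∞ := fun x => ENNReal.ofReal
    (Real.sqrt (gram (φ.pderiv 0 x) (φ.pderiv 1 x) (φ.pderiv 2 x))) with hF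
  have hconj : ((4:ℝ)/3).HolderConjugate 4 := ⟨by norm_num, by norm_num, by norm_num⟩
  have hFm : AEMeasurable F (volume.restrict B) := (skl_aemeas_gram φ).restrict
  have holder := ENNReal.lintegral_mul_le_Lp_mul_Lq (volume.restrict B) hconj hFm
    (aemeasurable_const (b := (1:ℝ≥0∞)))
  simp only [Pi.mul_apply, mul_one, ENNReal.one_rpow, lintegral_const,
    Measure.restrict_apply_univ, one_mul] at holder
  have h34 : (1:ℝ) / ((4:ℝ)/3) = (3:ℝ)/4 := by norm_num
  rw [h34] at holder
  have hmono : ∫⁻ x in B, F x ^ ((4:ℝ)/3)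
      ≤ ∫⁻ x in B, ENNReal.ofReal (ASq φ x) :=
    lintegral_mono fun x => skl_pointwise φ x
  calc ∫⁻ x in B, F x
      ≤ (∫⁻ x in B, F x ^ ((4:ℝ)/3)) ^ ((3:ℝ)/4) * volume B ^ ((1:ℝ)/4) := holder
    _ ≤ (∫⁻ x in B, ENNReal.ofReal (ASq φ x)) ^ ((3:ℝ)/4)
        * volume B ^ ((1:ℝ)/4) :=
        mul_le_mul_left (ENNReal.rpow_le_rpow hmono (by norm_num)) _
    _ = volume B ^ ((1:ℝ)/4)
        * (∫⁻ x in B, ENNReal.ofReal (ASq φ x)) ^ ((3:ℝ)/4) := mul_comm _ _
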